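/- Fix an integer k ≥ 3 and set γ_k := 1/2 − 1/k. Every solution ζ : (0,1) → ℝ of the linear ODE −(1/2)(u^{−1} − u) ζ′(u) − (4γ_k + u^{−2}) ζ(u) = u^{−6}(1 − u²)^{4γ_k} has the asymptotic behavior ζ(u) = u^{−4} + O(u^{−2} log(1/u)) as u ↘ 0 and ζ(u) = −(1 − u²)^{4γ_k} + O((1 − u²)^{4γ_k + 1} |log(1 − u²)|) as u ↗ 1. -/

import Mathlib

open Topology Filter Asymptotics Set

/-- `γ_k = 1/2 - 1/k`. -/
noncomputable def gam (k : ℕ) : ℝ := 1/2 - 1/(k:ℝ)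

/-!
With `b = 4γ_k`, the homogeneous equation is solved by `h(u) = u⁻² (1 - u²)^(1+b)`, and dividing
the ODE by `h` turns it into `(ζ / h)' = -2 u⁻³ (1 - u²)⁻²`, whose primitive
`V(u) = u⁻² - (1 - u²)⁻¹ - 4 log u + 2 log (1 - u²)` is found by partial fractions. Hence every
solution is `ζ = (V + c) h` for a constant `c`. Near `0` the term `u⁻² h ~ u⁻⁴` dominates and the
logarithms contribute `u⁻² log (1/u)`; near `1` the term `-(1 - u²)⁻¹ h ~ -(1 - u²)^b` dominates
and the largest remaining term is `2 log (1 - u²) h`.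
-/

noncomputable section

open Real

def forcingPrimitive (u : ℝ) : ℝ :=
  (u ^ 2)⁻¹ - (1 - u ^ 2)⁻¹ - 4 * log u + 2 * log (1 - u ^ 2)

def homogeneousSol (b u : ℝ) : ℝ := (u ^ 2)⁻¹ * (1 - u ^ 2) ^ (1 + b)

variable {b u : ℝ}

lemma hasDerivAt_one_sub_sq (u : ℝ) : HasDerivAt (fun x : ℝ => 1 - x ^ 2) (-(2 * u)) u := by
  simpa using (hasDerivAt_pow 2 u).const_sub 1

lemma hasDerivAt_forcingPrimitive (hu : u ∈ Ioo 0 1) :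
    HasDerivAt forcingPrimitive (-2 * (u ^ 3)⁻¹ * ((1 - u ^ 2) ^ 2)⁻¹) u := by
  obtain ⟨hu0, hu1⟩ := hu
  have hw : 1 - u ^ 2 ≠ 0 := by nlinarith
  have h := ((((hasDerivAt_pow 2 u).inv (by positivity)).sub
    ((hasDerivAt_one_sub_sq u).inv hw)).sub ((hasDerivAt_log hu0.ne').const_mul 4)).add
    (((hasDerivAt_one_sub_sq u).log hw).const_mul 2)
  refine h.congr_deriv ?_
  field_simp
  ring

lemma hasDerivAt_homogeneousSol (hu : u ∈ Ioo 0 1) :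
    HasDerivAt (homogeneousSol b) (-2 * (u ^ 3)⁻¹ * (1 - u ^ 2) ^ b * (1 + b * u ^ 2)) u := by
  obtain ⟨hu0, hu1⟩ := hu
  have hw : 0 < 1 - u ^ 2 := by nlinarith
  have h := ((hasDerivAt_pow 2 u).inv (by positivity)).mul
    ((hasDerivAt_one_sub_sq u).rpow_const (p := 1 + b) (Or.inl hw.ne'))
  refine h.congr_deriv ?_
  rw [Pi.inv_apply, add_sub_cancel_left, rpow_add hw, rpow_one]
  field_simp
  ring

lemma homogeneousSol_pos (hu : u ∈ Ioo 0 1) : 0 < homogeneousSol b u := by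
  obtain ⟨hu0, hu1⟩ := hu
  have hw : 0 < 1 - u ^ 2 := by nlinarith
  unfold homogeneousSol
  positivity

lemma hasDerivAt_div_homogeneousSol_sub_forcingPrimitive {ζ : ℝ → ℝ} {ζ'u : ℝ}
    (hu : u ∈ Ioo 0 1) (hζ : HasDerivAt ζ ζ'u u)
    (hode : -(1/2) * (u⁻¹ - u) * ζ'u - (b + (u ^ 2)⁻¹) * ζ u = (u ^ 6)⁻¹ * (1 - u ^ 2) ^ b) :
    HasDerivAt (fun x => ζ x / homogeneousSol b x - forcingPrimitive x) 0 u := by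
  have h := (hζ.div (hasDerivAt_homogeneousSol (b := b) hu) (homogeneousSol_pos hu).ne').sub
    (hasDerivAt_forcingPrimitive hu)
  refine h.congr_deriv ?_
  obtain ⟨hu0, hu1⟩ := hu
  have hw : 0 < 1 - u ^ 2 := by nlinarith
  have hζ' : ζ'u =
      -(2 * u / (1 - u ^ 2)) * ((b + (u ^ 2)⁻¹) * ζ u + (u ^ 6)⁻¹ * (1 - u ^ 2) ^ b) := by
    field_simp at hode ⊢
    linear_combination -hode
  rw [hζ', homogeneousSol, rpow_add hw, rpow_one]
  field_simp
  ring

lemma exists_eq_forcingPrimitive_add_const_mul_homogeneousSol {ζ ζ' : ℝ → ℝ}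
    (hζ : ∀ u ∈ Ioo (0:ℝ) 1, HasDerivAt ζ (ζ' u) u)
    (hode : ∀ u ∈ Ioo (0:ℝ) 1,
      -(1/2) * (u⁻¹ - u) * ζ' u - (b + (u ^ 2)⁻¹) * ζ u = (u ^ 6)⁻¹ * (1 - u ^ 2) ^ b) :
    ∃ c, ∀ u ∈ Ioo (0:ℝ) 1, ζ u = (forcingPrimitive u + c) * homogeneousSol b u := by
  have hderiv (u) (hu : u ∈ Ioo (0:ℝ) 1) :=
    hasDerivAt_div_homogeneousSol_sub_forcingPrimitive hu (hζ u hu) (hode u hu)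
  obtain ⟨c, hc⟩ := isOpen_Ioo.exists_is_const_of_deriv_eq_zero isPreconnected_Ioo
    (fun u hu => (hderiv u hu).differentiableAt.differentiableWithinAt)
    (fun u hu => (hderiv u hu).deriv)
  refine ⟨c, fun u hu => ?_⟩
  rw [← hc u hu, add_sub_cancel, div_mul_cancel₀ _ (homogeneousSol_pos hu).ne']

lemma one_isBigO_log_one_div_nhdsGT_zero :
    (fun _ => (1:ℝ)) =O[𝓝[>] 0] fun u => log (1 / u) := by
  refine (isLittleO_one_left_iff ℝ).2 ?_ |>.isBigO
  simpa only [one_div, norm_eq_abs, Function.comp_def] using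
    tendsto_abs_atTop_atTop.comp (tendsto_log_atTop.comp tendsto_inv_nhdsGT_zero)

lemma one_isBigO_abs_log_one_sub_sq_nhdsLT_one :
    (fun _ => (1:ℝ)) =O[𝓝[<] 1] fun u => |log (1 - u ^ 2)| := by
  have hw : Tendsto (fun u : ℝ => 1 - u ^ 2) (𝓝[<] 1) (𝓝[>] 0) := by
    refine tendsto_nhdsWithin_iff.2 ⟨?_, ?_⟩
    · exact (Continuous.tendsto' (by fun_prop) _ _ (by norm_num)).mono_left nhdsWithin_le_nhds
    · filter_upwards [Ioo_mem_nhdsLT zero_lt_one] with u ⟨hu0, hu1⟩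
      show 0 < 1 - u ^ 2
      nlinarith
  refine (isLittleO_one_left_iff ℝ).2 ?_ |>.isBigO
  simpa only [norm_eq_abs, abs_abs, Function.comp_def] using
    tendsto_abs_atBot_atTop.comp (tendsto_log_nhdsGT_zero.comp hw)

lemma one_sub_sq_rpow_sub_one_isBigO_sq (p : ℝ) :
    (fun u : ℝ => (1 - u ^ 2) ^ p - 1) =O[𝓝 0] fun u => u ^ 2 := by
  have hg : HasDerivAt (fun t : ℝ => (1 - t) ^ p) _ 0 :=
    ((hasDerivAt_id 0).const_sub 1).rpow_const (p := p) (Or.inl (by norm_num))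
  simpa [Function.comp_def] using
    hg.isBigO_sub.comp_tendsto ((continuous_pow 2).tendsto' 0 0 (by simp))

lemma forcingPrimitive_add_mul_homogeneousSol_sub_isBigO_nhdsGT_zero (b c : ℝ) :
    (fun u => (forcingPrimitive u + c) * homogeneousSol b u - (u ^ 4)⁻¹) =O[𝓝[>] 0]
      fun u => (u ^ 2)⁻¹ * log (1 / u) := by
  set P : ℝ → ℝ := fun u => (1 - u ^ 2) ^ (1 + b)
  set T : ℝ → ℝ := fun u => -(1 - u ^ 2)⁻¹ + 2 * log (1 - u ^ 2) + c
  have hid (u : ℝ) : (forcingPrimitive u + c) * homogeneousSol b u - (u ^ 4)⁻¹ =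
      (u ^ 2)⁻¹ * ((u ^ 2)⁻¹ * (P u - 1) + P u * (T u + 4 * log (1 / u))) := by
    simp only [forcingPrimitive, homogeneousSol, P, T, one_div, log_inv]
    ring
  have hP1 : (fun u => (u ^ 2)⁻¹ * (P u - 1)) =O[𝓝[>] 0] fun _ => (1:ℝ) := by
    refine ((isBigO_refl (fun u : ℝ => (u ^ 2)⁻¹) _).mul
      ((one_sub_sq_rpow_sub_one_isBigO_sq (1 + b)).mono nhdsWithin_le_nhds)).trans_eventuallyEq
      ?_
    filter_upwards [self_mem_nhdsWithin] with u (hu : 0 < u)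
    field_simp
  have hP : P =O[𝓝[>] 0] fun _ => (1:ℝ) := by
    refine Tendsto.isBigO_one ℝ (c := P 0) ?_
    exact (ContinuousAt.tendsto (by fun_prop (disch := norm_num))).mono_left nhdsWithin_le_nhds
  have hT : T =O[𝓝[>] 0] fun _ => (1:ℝ) := by
    refine Tendsto.isBigO_one ℝ (c := T 0) ?_
    exact (ContinuousAt.tendsto (by fun_prop (disch := norm_num))).mono_left nhdsWithin_le_nhds
  have hlog := one_isBigO_log_one_div_nhdsGT_zero
  simp only [hid]
  refine (isBigO_refl _ _).mul ?_
  exact (hP1.trans hlog).add <| (hP.mul ((hT.trans hlog).add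
    ((isBigO_refl _ _).const_mul_left 4))).congr_right fun _ => one_mul _

lemma forcingPrimitive_add_mul_homogeneousSol_add_isBigO_nhdsLT_one (b c : ℝ) :
    (fun u => (forcingPrimitive u + c) * homogeneousSol b u + (1 - u ^ 2) ^ b) =O[𝓝[<] 1]
      fun u => (1 - u ^ 2) ^ (b + 1) * |log (1 - u ^ 2)| := by
  set T : ℝ → ℝ := fun u => (u ^ 2)⁻¹ - 4 * log u + c - 1
  have hid :
      (fun u => (forcingPrimitive u + c) * homogeneousSol b u + (1 - u ^ 2) ^ b) =ᶠ[𝓝[<] 1]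
      fun u => (u ^ 2)⁻¹ * (1 - u ^ 2) ^ (b + 1) * (T u + 2 * log (1 - u ^ 2)) := by
    filter_upwards [Ioo_mem_nhdsLT zero_lt_one] with u ⟨hu0, hu1⟩
    have hw : 0 < 1 - u ^ 2 := by nlinarith
    simp only [forcingPrimitive, homogeneousSol, T, add_comm 1 b, rpow_add hw, rpow_one]
    field_simp
    ring
  have hinv : (fun u : ℝ => (u ^ 2)⁻¹) =O[𝓝[<] 1] fun _ => (1:ℝ) :=
    Tendsto.isBigO_one ℝ (c := (1 ^ 2)⁻¹)
      ((ContinuousAt.tendsto (by fun_prop (disch := norm_num))).mono_left nhdsWithin_le_nhds)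
  have hT : T =O[𝓝[<] 1] fun _ => (1:ℝ) :=
    Tendsto.isBigO_one ℝ (c := T 1)
      ((ContinuousAt.tendsto (by fun_prop (disch := norm_num))).mono_left nhdsWithin_le_nhds)
  refine hid.trans_isBigO
    (((hinv.mul (isBigO_refl _ _)).congr_right fun _ => one_mul _).mul ?_)
  exact (hT.trans one_isBigO_abs_log_one_sub_sq_nhdsLT_one).add
    ((isBigO_abs_right.2 (isBigO_refl _ _)).const_mul_left 2)

end

theorem stmt2_general (k : ℕ) (ζ ζ' : ℝ → ℝ)
    (hderiv : ∀ u ∈ Set.Ioo (0:ℝ) 1, HasDerivAt ζ (ζ' u) u)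
    (hode : ∀ u ∈ Set.Ioo (0:ℝ) 1,
      -(1/2) * (u⁻¹ - u) * ζ' u - (4 * gam k + u ^ (-2:ℝ)) * ζ u
        = u ^ (-6:ℝ) * (1 - u^2) ^ (4 * gam k)) :
    ((fun u => ζ u - u ^ (-4:ℝ)) =O[𝓝[>] (0:ℝ)]
        fun u => u ^ (-2:ℝ) * Real.log (1/u)) ∧
    ((fun u => ζ u + (1 - u^2) ^ (4 * gam k)) =O[𝓝[<] (1:ℝ)]
        fun u => (1 - u^2) ^ (4 * gam k + 1) * |Real.log (1 - u^2)|) := by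
  simp only [Real.rpow_neg_ofNat, zpow_neg, zpow_ofNat] at hode ⊢
  obtain ⟨c, hζ⟩ := exists_eq_forcingPrimitive_add_const_mul_homogeneousSol hderiv hode
  have hζ_eventually (l : Filter ℝ) (hl : Ioo 0 1 ∈ l) :
      ζ =ᶠ[l] fun u => (forcingPrimitive u + c) * homogeneousSol (4 * gam k) u :=
    eventually_of_mem hl hζ
  exact ⟨(hζ_eventually _ (Ioo_mem_nhdsGT zero_lt_one)).sub EventuallyEq.rfl |>.trans_isBigO
      (forcingPrimitive_add_mul_homogeneousSol_sub_isBigO_nhdsGT_zero _ c),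
    (hζ_eventually _ (Ioo_mem_nhdsLT zero_lt_one)).add EventuallyEq.rfl |>.trans_isBigO
      (forcingPrimitive_add_mul_homogeneousSol_add_isBigO_nhdsLT_one _ c)⟩

/-- every solution `ζ` of the linear ODE
`-(1/2)(u⁻¹ - u) ζ' - (4γ_k + u⁻²) ζ = u⁻⁶ (1-u²)^{4γ_k}` on `(0,1)`
satisfies `ζ(u) = u⁻⁴ + O(u⁻² log(1/u))` as `u ↘ 0` and
`ζ(u) = -(1-u²)^{4γ_k} + O((1-u²)^{4γ_k+1}|log(1-u²)|)` as `u ↗ 1`. -/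
theorem stmt2 (k : ℕ) (hk : 3 ≤ k) (ζ ζ' : ℝ → ℝ)
    (hderiv : ∀ u ∈ Set.Ioo (0:ℝ) 1, HasDerivAt ζ (ζ' u) u)
    (hode : ∀ u ∈ Set.Ioo (0:ℝ) 1,
      -(1/2) * (u⁻¹ - u) * ζ' u - (4 * gam k + u ^ (-2:ℝ)) * ζ u
        = u ^ (-6:ℝ) * (1 - u^2) ^ (4 * gam k)) :
    ((fun u => ζ u - u ^ (-4:ℝ)) =O[𝓝[>] (0:ℝ)]
        fun u => u ^ (-2:ℝ) * Real.log (1/u)) ∧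
    ((fun u => ζ u + (1 - u^2) ^ (4 * gam k)) =O[𝓝[<] (1:ℝ)]
        fun u => (1 - u^2) ^ (4 * gam k + 1) * |Real.log (1 - u^2)|) :=
  stmt2_general k ζ ζ' hderiv hode
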